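/- Let A = Π_Q be the preprojective algebra of an ADE quiver Q. Applying Hom_{A^e}(-,A) to the Schofield resolution and using the identifications Hom_{A^e}(A⊗_R A, A) = A^R, Hom_{A^e}(A⊗_R 𝔑, A) = 𝔑^R, Hom_{A^e}(A⊗_R V⊗_R A, A) = (V⊗_R A)^R[-2], Hom_{A^e}(A⊗_R V⊗_R 𝔑, A) = (V⊗_R 𝔑)^R[-2], the differentials of the resulting Hochschild cohomology complex coincide with those of the Hochschild homology complex up to shift: d_1* = d_2'[-2], d_2* = d_1'[-2], d_3* = d_6'[-2h-2], d_4* = d_5'[-2h-2], d_5* = d_4'[-2h-2], d_6* = d_3'[-2h-2]. Hence each 3-term portion of the Hochschild cohomology complex is identified, up to a shift in degree, with a corresponding portion of the Hochschild homology complex. -/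

import Mathlib

open scoped BigOperators

section QuiverShape

variable (I E : Type) [Fintype I] [DecidableEq I] [Fintype E]

/-- The adjacency matrix of the double quiver `Q̄` (equivalently, of the underlying
graph of the quiver with arrow set `E`): the `(i,j)` entry is the number of arrows
between `i` and `j` in `Q̄`. -/
def adjMatrix (src tgt : E → I) : Matrix I I ℤ := fun i j =>
  ((Finset.univ.filter fun a => src a = i ∧ tgt a = j).card : ℤ) +
  ((Finset.univ.filter fun a => src a = j ∧ tgt a = i).card : ℤ)

/-- The quiver with vertex set `I`, arrow set `E` and endpoint maps `src`, `tgt` is of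
ADE type: its underlying graph is connected and the symmetrized Cartan matrix
`2·1 - C` is positive definite (for a connected graph this holds if and only if it is
a simply-laced Dynkin diagram, i.e. of type Aₙ, Dₙ, E₆, E₇ or E₈). -/
def IsADEShape (src tgt : E → I) : Prop :=
  (∀ i j : I, Relation.ReflTransGen
      (fun u v => ∃ a, (src a = u ∧ tgt a = v) ∨ (src a = v ∧ tgt a = u)) i j) ∧
  ((2 : ℝ) • (1 : Matrix I I ℝ) -
      (adjMatrix I E src tgt).map (Int.cast : ℤ → ℝ)).PosDef

/-- The source map of the double quiver `Q̄ = Q ∪ Q*`: an arrow of `Q̄` is either an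
arrow `a ∈ Q` (`Sum.inl a`) or a reversed arrow `a* ∈ Q*` (`Sum.inr a`). -/
def dblSrc (src tgt : E → I) : E ⊕ E → I := Sum.elim src tgt

/-- The target map of the double quiver `Q̄ = Q ∪ Q*`. -/
def dblTgt (src tgt : E → I) : E ⊕ E → I := Sum.elim tgt src

/-- The defining relations of the (deformed) preprojective algebra
`A_λ = ℂQ̄/(∑_{a ∈ Q} [a,a*] - ∑_i λ_i e_i)` as a quotient of the free algebra on the
trivial paths `e_i` and the arrows of the double quiver: the `e_i` are orthogonal
idempotents summing to `1`, arrows compose according to their endpoints, and the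
(deformed) preprojective relation holds.  For `λ = 0` this presents `Π_Q`. -/
inductive PathRel (src tgt : E → I) (lam : I → ℂ) :
    FreeAlgebra ℂ (I ⊕ (E ⊕ E)) → FreeAlgebra ℂ (I ⊕ (E ⊕ E)) → Prop
  | vertex_mul (i j : I) :
      PathRel src tgt lam
        (FreeAlgebra.ι ℂ (Sum.inl i : I ⊕ (E ⊕ E)) * FreeAlgebra.ι ℂ (Sum.inl j))
        (if i = j then FreeAlgebra.ι ℂ (Sum.inl i : I ⊕ (E ⊕ E)) else 0)
  | sum_vertices :
      PathRel src tgt lam (∑ i : I, FreeAlgebra.ι ℂ (Sum.inl i : I ⊕ (E ⊕ E))) 1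
  | arr_src (x : E ⊕ E) :
      PathRel src tgt lam
        (FreeAlgebra.ι ℂ (Sum.inr x : I ⊕ (E ⊕ E)) *
          FreeAlgebra.ι ℂ (Sum.inl (dblSrc I E src tgt x)))
        (FreeAlgebra.ι ℂ (Sum.inr x : I ⊕ (E ⊕ E)))
  | arr_tgt (x : E ⊕ E) :
      PathRel src tgt lam
        (FreeAlgebra.ι ℂ (Sum.inl (dblTgt I E src tgt x) : I ⊕ (E ⊕ E)) *
          FreeAlgebra.ι ℂ (Sum.inr x))
        (FreeAlgebra.ι ℂ (Sum.inr x : I ⊕ (E ⊕ E)))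
  | preproj :
      PathRel src tgt lam
        (∑ a : E,
          (FreeAlgebra.ι ℂ (Sum.inr (Sum.inl a) : I ⊕ (E ⊕ E)) *
              FreeAlgebra.ι ℂ (Sum.inr (Sum.inr a)) -
            FreeAlgebra.ι ℂ (Sum.inr (Sum.inr a) : I ⊕ (E ⊕ E)) *
              FreeAlgebra.ι ℂ (Sum.inr (Sum.inl a))))
        (∑ i : I, lam i • FreeAlgebra.ι ℂ (Sum.inl i : I ⊕ (E ⊕ E)))

end QuiverShape

/-- The preprojective algebra `A = Π_Q` of a quiver `Q`, presented as the quotient of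
the path algebra `ℂQ̄` of the double quiver by the preprojective relation
`∑_{a ∈ Q} [a, a*] = 0` (field `pres`), together with the images `e i` of the trivial
paths and `arr x` of the arrows of `Q̄`, its Frobenius form `f` with Nakayama
automorphism `η` (`f` exists whenever `Q` is of Dynkin type), and a basis `bas` of `A`
with dual basis `dbas` with respect to the Frobenius form `(x, y) = f (x * y)`. -/
structure PreprojectiveAlgebra where
  I : Type
  [fintypeI : Fintype I]
  [decEqI : DecidableEq I]
  E : Type
  [fintypeE : Fintype E]
  [decEqE : DecidableEq E]
  src : E → I
  tgt : E → I
  A : Type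
  [ringA : Ring A]
  [algA : Algebra ℂ A]
  [fdA : FiniteDimensional ℂ A]
  e : I → A
  arr : E ⊕ E → A
  idem : ∀ i, e i * e i = e i
  orth : ∀ i j, i ≠ j → e i * e j = 0
  sum_e : ∑ i, e i = 1
  arr_e : ∀ x : E ⊕ E, arr x * e (dblSrc I E src tgt x) = arr x
  e_arr : ∀ x : E ⊕ E, e (dblTgt I E src tgt x) * arr x = arr x
  preproj :
    ∑ a : E, (arr (Sum.inl a) * arr (Sum.inr a) - arr (Sum.inr a) * arr (Sum.inl a)) = 0
  pres : ∃ iso : RingQuot (PathRel I E src tgt fun _ => 0) ≃ₐ[ℂ] A,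
    (∀ i, iso (RingQuot.mkAlgHom ℂ (PathRel I E src tgt fun _ => 0)
        (FreeAlgebra.ι ℂ (Sum.inl i))) = e i) ∧
    (∀ x, iso (RingQuot.mkAlgHom ℂ (PathRel I E src tgt fun _ => 0)
        (FreeAlgebra.ι ℂ (Sum.inr x))) = arr x)
  f : A →ₗ[ℂ] ℂ
  nondeg₁ : ∀ x : A, x ≠ 0 → ∃ y, f (x * y) ≠ 0
  nondeg₂ : ∀ y : A, y ≠ 0 → ∃ x, f (x * y) ≠ 0
  eta : A ≃ₐ[ℂ] A
  nakayama : ∀ x y, f (x * y) = f (y * eta x)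
  eta_invol : ∀ x, eta (eta x) = x
  dimA : ℕ
  bas : Fin dimA → A
  dbas : Fin dimA → A
  bas_span : Submodule.span ℂ (Set.range bas) = ⊤
  dual : ∀ i j, f (bas i * dbas j) = if i = j then 1 else 0

attribute [instance] PreprojectiveAlgebra.fintypeI PreprojectiveAlgebra.decEqI
  PreprojectiveAlgebra.fintypeE PreprojectiveAlgebra.decEqE PreprojectiveAlgebra.ringA PreprojectiveAlgebra.algA
  PreprojectiveAlgebra.fdA

namespace PreprojectiveAlgebra

variable (P : PreprojectiveAlgebra)

/-- `Q` is of ADE type. -/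
def IsADE : Prop := IsADEShape P.I P.E P.src P.tgt

/-- the source of an arrow of the double quiver -/
def dsrc : P.E ⊕ P.E → P.I := dblSrc P.I P.E P.src P.tgt

/-- the target of an arrow of the double quiver -/
def dtgt : P.E ⊕ P.E → P.I := dblTgt P.I P.E P.src P.tgt

/-- the involution `a ↦ a*` of the arrows of the double quiver -/
def star : P.E ⊕ P.E → P.E ⊕ P.E := Sum.elim Sum.inr Sum.inl

/-- `ε_a = 1` for `a ∈ Q`, `ε_a = -1` for `a ∈ Q*` -/
def eps : P.E ⊕ P.E → ℂ := Sum.elim (fun _ => 1) fun _ => -1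

end PreprojectiveAlgebra

namespace PreprojectiveAlgebra

open TensorProduct

variable (P : PreprojectiveAlgebra)

/-- The `ℂ`-subspace of `A ⊗_ℂ A` spanned by the elements `(x e_i) ⊗ y - x ⊗ (e_i y)`;
the quotient by it is `A ⊗_R A`. -/
noncomputable def relR : Submodule ℂ (P.A ⊗[ℂ] P.A) :=
  Submodule.span ℂ
    {z | ∃ (x y : P.A) (i : P.I), z = (x * P.e i) ⊗ₜ[ℂ] y - x ⊗ₜ[ℂ] (P.e i * y)}

/-- `A ⊗_R A` (also the underlying space of `A ⊗_R 𝔑`, since the left `R`-action on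
`𝔑` is untwisted). -/
noncomputable abbrev AxA := (P.A ⊗[ℂ] P.A) ⧸ P.relR

/-- the canonical projection `A ⊗_ℂ A → A ⊗_R A` -/
noncomputable def mkAA : P.A ⊗[ℂ] P.A →ₗ[ℂ] P.AxA := P.relR.mkQ

/-- Elements of `A ⊗_R V ⊗_R A` are recorded as functions on the arrows of `Q̄`
valued in `A ⊗_ℂ A` (the function `b ↦ x_b ⊗ y_b` records `∑_b x_b ⊗ b ⊗ y_b`),
modulo the span `relV` of the middle `R`-linearity relations. -/
noncomputable def relV : Submodule ℂ (P.E ⊕ P.E → P.A ⊗[ℂ] P.A) :=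
  Submodule.span ℂ
    {z | ∃ (b : P.E ⊕ P.E) (x y : P.A) (i : P.I),
      z = Pi.single b ((x * P.e i) ⊗ₜ[ℂ] y) -
            (if i = P.dtgt b then Pi.single b (x ⊗ₜ[ℂ] y) else 0) ∨
      z = Pi.single b (x ⊗ₜ[ℂ] (P.e i * y)) -
            (if i = P.dsrc b then Pi.single b (x ⊗ₜ[ℂ] y) else 0)}

/-- `A ⊗_R V ⊗_R A` (also the underlying space of `A ⊗_R V ⊗_R 𝔑`). -/
noncomputable abbrev AVA := (P.E ⊕ P.E → P.A ⊗[ℂ] P.A) ⧸ P.relV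

/-- the canonical projection onto `A ⊗_R V ⊗_R A` -/
noncomputable def mkAVA : (P.E ⊕ P.E → P.A ⊗[ℂ] P.A) →ₗ[ℂ] P.AVA := P.relV.mkQ

/-- `d₀ : A ⊗_R A → A`, `x ⊗ y ↦ x y` (this is also the map
`j : A ⊗_R 𝔑 → 𝔑` on underlying spaces). -/
noncomputable def d0 : P.AxA →ₗ[ℂ] P.A :=
  P.relR.liftQ (TensorProduct.lift (LinearMap.mul ℂ P.A)) (by
    rw [relR, Submodule.span_le]
    rintro z ⟨x, y, i, rfl⟩
    simp [LinearMap.mem_ker, mul_assoc])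


theorem e_arr_dtgt (b : P.E ⊕ P.E) : P.e (P.dtgt b) * P.arr b = P.arr b := P.e_arr b

theorem arr_e_dsrc (b : P.E ⊕ P.E) : P.arr b * P.e (P.dsrc b) = P.arr b := P.arr_e b

theorem e_mul_arr (i : P.I) (b : P.E ⊕ P.E) (h : i ≠ P.dtgt b) :
    P.e i * P.arr b = 0 := by
  calc P.e i * P.arr b = P.e i * (P.e (P.dtgt b) * P.arr b) := by rw [P.e_arr_dtgt b]
    _ = (P.e i * P.e (P.dtgt b)) * P.arr b := by rw [mul_assoc]
    _ = 0 := by rw [P.orth i _ h, zero_mul]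

theorem arr_mul_e (i : P.I) (b : P.E ⊕ P.E) (h : P.dsrc b ≠ i) :
    P.arr b * P.e i = 0 := by
  calc P.arr b * P.e i = (P.arr b * P.e (P.dsrc b)) * P.e i := by rw [P.arr_e_dsrc b]
    _ = P.arr b * (P.e (P.dsrc b) * P.e i) := by rw [mul_assoc]
    _ = 0 := by rw [P.orth _ i h, mul_zero]

theorem gen_mem_relR (x y : P.A) (i : P.I) :
    (x * P.e i) ⊗ₜ[ℂ] y - x ⊗ₜ[ℂ] (P.e i * y) ∈ P.relR :=
  Submodule.subset_span ⟨x, y, i, rfl⟩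

theorem mkAA_eq (u v : P.A ⊗[ℂ] P.A) (h : u - v ∈ P.relR) : P.mkAA u = P.mkAA v := by
  rw [mkAA, Submodule.mkQ_apply, Submodule.mkQ_apply, Submodule.Quotient.eq]; exact h

theorem mkAA_zero (u : P.A ⊗[ℂ] P.A) (h : u ∈ P.relR) : P.mkAA u = 0 := by
  rw [mkAA, Submodule.mkQ_apply, Submodule.Quotient.mk_eq_zero]; exact h

/-- evaluation of `lsum` on `Pi.single` -/
theorem lsum_piSingle {N : Type} [AddCommGroup N] [Module ℂ N]
    (G : ∀ _ : P.E ⊕ P.E, (P.A ⊗[ℂ] P.A) →ₗ[ℂ] N) (b : P.E ⊕ P.E) (u : P.A ⊗[ℂ] P.A) :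
    (LinearMap.lsum ℂ (fun _ : P.E ⊕ P.E => P.A ⊗[ℂ] P.A) ℂ G) (Pi.single b u) = G b u := by
  classical
  rcases b with b | b <;>
    simp [LinearMap.lsum_apply, LinearMap.sum_apply, Pi.single_apply, apply_ite,
      Finset.sum_ite_eq]

/-- `d₁ : A ⊗_R V ⊗_R A → A ⊗_R A`, `x ⊗ v ⊗ y ↦ x v ⊗ y - x ⊗ v y` (this is also the
map `d₄ : A ⊗_R V ⊗_R 𝔑 → A ⊗_R 𝔑` on underlying spaces). -/
noncomputable def d1 : P.AVA →ₗ[ℂ] P.AxA :=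
  P.relV.liftQ
    ((LinearMap.lsum ℂ (fun _ : P.E ⊕ P.E => P.A ⊗[ℂ] P.A) ℂ)
      (fun b => P.mkAA ∘ₗ
        (LinearMap.rTensor P.A (LinearMap.mulRight ℂ (P.arr b)) -
          LinearMap.lTensor P.A (LinearMap.mulLeft ℂ (P.arr b)))))
    (by
      rw [relV, Submodule.span_le]
      rintro z ⟨b, x, y, i, rfl | rfl⟩ <;>
        simp only [SetLike.mem_coe, LinearMap.mem_ker, map_sub, apply_ite, map_zero,
          lsum_piSingle, LinearMap.coe_comp, Function.comp_apply, LinearMap.sub_apply,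
          LinearMap.rTensor_tmul, LinearMap.lTensor_tmul, LinearMap.mulRight_apply,
          LinearMap.mulLeft_apply]
      · by_cases h : i = P.dtgt b
        · subst h
          have h1 : x * P.e (P.dtgt b) * P.arr b = x * P.arr b := by
            rw [mul_assoc, P.e_arr_dtgt b]
          have h3 : P.e (P.dtgt b) * (P.arr b * y) = P.arr b * y := by
            rw [← mul_assoc, P.e_arr_dtgt b]
          have h2 : P.mkAA ((x * P.e (P.dtgt b)) ⊗ₜ[ℂ] (P.arr b * y)) =
              P.mkAA (x ⊗ₜ[ℂ] (P.arr b * y)) := by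
            have hg := P.gen_mem_relR x (P.arr b * y) (P.dtgt b)
            rw [h3] at hg
            exact P.mkAA_eq _ _ hg
          rw [if_pos rfl, h1, h2]
          abel
        · rw [if_neg h]
          have h0 : P.e i * P.arr b = 0 := P.e_mul_arr i b h
          have h1 : x * P.e i * P.arr b = 0 := by rw [mul_assoc, h0, mul_zero]
          have h2 : P.mkAA ((x * P.e i) ⊗ₜ[ℂ] (P.arr b * y)) = 0 := by
            refine P.mkAA_zero _ ?_
            have hg := P.gen_mem_relR x (P.arr b * y) i
            rwa [show P.e i * (P.arr b * y) = 0 by rw [← mul_assoc, h0, zero_mul],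
              TensorProduct.tmul_zero, sub_zero] at hg
          rw [h1, TensorProduct.zero_tmul, map_zero, h2]
          abel
      · by_cases h : i = P.dsrc b
        · subst h
          have h1 : P.arr b * (P.e (P.dsrc b) * y) = P.arr b * y := by
            rw [← mul_assoc, P.arr_e_dsrc b]
          have h2 : P.mkAA ((x * P.arr b) ⊗ₜ[ℂ] (P.e (P.dsrc b) * y)) =
              P.mkAA ((x * P.arr b) ⊗ₜ[ℂ] y) := by
            have hg := P.gen_mem_relR (x * P.arr b) y (P.dsrc b)
            have h4 : x * P.arr b * P.e (P.dsrc b) = x * P.arr b := by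
              rw [mul_assoc, P.arr_e_dsrc b]
            rw [h4] at hg
            have h5 := Submodule.neg_mem _ hg
            rw [neg_sub] at h5
            exact P.mkAA_eq _ _ h5
          rw [if_pos rfl, h1, h2]
          abel
        · rw [if_neg h]
          have h0 : P.arr b * P.e i = 0 := P.arr_mul_e i b (fun hh => h hh.symm)
          have h1 : P.arr b * (P.e i * y) = 0 := by rw [← mul_assoc, h0, zero_mul]
          have h2 : P.mkAA ((x * P.arr b) ⊗ₜ[ℂ] (P.e i * y)) = 0 := by
            refine P.mkAA_zero _ ?_
            have hg := P.gen_mem_relR (x * P.arr b) y i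
            have h4 : x * P.arr b * P.e i = 0 := by rw [mul_assoc, h0, mul_zero]
            rw [h4, TensorProduct.zero_tmul, zero_sub] at hg
            have h5 := Submodule.neg_mem _ hg
            rwa [neg_neg] at h5
          rw [h1, TensorProduct.tmul_zero, map_zero, h2]
          abel)


theorem dsrc_star (b : P.E ⊕ P.E) : P.dsrc (P.star b) = P.dtgt b := by
  rcases b with b | b <;> rfl

theorem dtgt_star (b : P.E ⊕ P.E) : P.dtgt (P.star b) = P.dsrc b := by
  rcases b with b | b <;> rfl

theorem gen1_mem_relV (b : P.E ⊕ P.E) (x y : P.A) (i : P.I) :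
    Pi.single b ((x * P.e i) ⊗ₜ[ℂ] y) -
      (if i = P.dtgt b then Pi.single b (x ⊗ₜ[ℂ] y) else 0) ∈ P.relV :=
  Submodule.subset_span ⟨b, x, y, i, Or.inl rfl⟩

theorem gen2_mem_relV (b : P.E ⊕ P.E) (x y : P.A) (i : P.I) :
    Pi.single b (x ⊗ₜ[ℂ] (P.e i * y)) -
      (if i = P.dsrc b then Pi.single b (x ⊗ₜ[ℂ] y) else 0) ∈ P.relV :=
  Submodule.subset_span ⟨b, x, y, i, Or.inr rfl⟩

theorem mkAVA_zero (u : P.E ⊕ P.E → P.A ⊗[ℂ] P.A) (h : u ∈ P.relV) : P.mkAVA u = 0 := by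
  rw [mkAVA, Submodule.mkQ_apply, Submodule.Quotient.mk_eq_zero]; exact h

theorem mem_relV_of_single (f : P.E ⊕ P.E → P.A ⊗[ℂ] P.A)
    (h : ∀ b, Pi.single b (f b) ∈ P.relV) : f ∈ P.relV := by
  rw [← Finset.univ_sum_single f]
  exact Submodule.sum_mem _ fun b _ => h b

/-- `d₂ : A ⊗_R A → A ⊗_R V ⊗_R A`,
`z ⊗ t ↦ ∑_{a ∈ Q̄} ε_a z a ⊗ a* ⊗ t + ∑_{a ∈ Q̄} ε_a z ⊗ a ⊗ a* t` (this is also the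
map `d₅ : A ⊗_R 𝔑 → A ⊗_R V ⊗_R 𝔑` on underlying spaces). -/
noncomputable def d2 : P.AxA →ₗ[ℂ] P.AVA :=
  P.relR.liftQ
    (P.mkAVA ∘ₗ
      LinearMap.pi (fun b => P.eps b •
        (LinearMap.lTensor P.A (LinearMap.mulLeft ℂ (P.arr (P.star b))) -
          LinearMap.rTensor P.A (LinearMap.mulRight ℂ (P.arr (P.star b))))))
    (by
      rw [relR, Submodule.span_le]
      rintro z ⟨x, y, i, rfl⟩
      simp only [SetLike.mem_coe, LinearMap.mem_ker, LinearMap.coe_comp,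
        Function.comp_apply]
      refine P.mkAVA_zero _ (P.mem_relV_of_single _ fun b => ?_)
      simp only [LinearMap.pi_apply, LinearMap.smul_apply, LinearMap.sub_apply, map_sub,
        LinearMap.lTensor_tmul, LinearMap.rTensor_tmul, LinearMap.mulLeft_apply,
        LinearMap.mulRight_apply]
      rw [← smul_sub, Pi.single_smul]
      refine Submodule.smul_mem _ _ ?_
      have hS2 : x ⊗ₜ[ℂ] (P.arr (P.star b) * (P.e i * y)) =
          (if i = P.dtgt b then x ⊗ₜ[ℂ] (P.arr (P.star b) * y) else 0) := by
        by_cases h : i = P.dtgt b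
        · rw [if_pos h, ← mul_assoc,
            show P.arr (P.star b) * P.e i = P.arr (P.star b) from by
              rw [h, ← P.dsrc_star b]; exact P.arr_e_dsrc (P.star b)]
        · rw [if_neg h, ← mul_assoc,
            show P.arr (P.star b) * P.e i = 0 from
              P.arr_mul_e i (P.star b)
                (by rw [P.dsrc_star b]; exact fun hh => h hh.symm),
            zero_mul, TensorProduct.tmul_zero]
      have hS3 : (x * P.e i * P.arr (P.star b)) ⊗ₜ[ℂ] y =
          (if i = P.dsrc b then (x * P.arr (P.star b)) ⊗ₜ[ℂ] y else 0) := by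
        by_cases h : i = P.dsrc b
        · rw [if_pos h, mul_assoc,
            show P.e i * P.arr (P.star b) = P.arr (P.star b) from by
              rw [h, ← P.dtgt_star b]; exact P.e_arr_dtgt (P.star b)]
        · rw [if_neg h, mul_assoc,
            show P.e i * P.arr (P.star b) = 0 from
              P.e_mul_arr i (P.star b) (by rw [P.dtgt_star b]; exact h),
            mul_zero, TensorProduct.zero_tmul]
      rw [hS2, hS3]
      have g1 := P.gen1_mem_relV b x (P.arr (P.star b) * y) i
      have g2 := P.gen2_mem_relV b (x * P.arr (P.star b)) y i
      have heq : (Pi.single b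
            (((x * P.e i) ⊗ₜ[ℂ] (P.arr (P.star b) * y) -
              (if i = P.dsrc b then (x * P.arr (P.star b)) ⊗ₜ[ℂ] y else 0)) -
            ((if i = P.dtgt b then x ⊗ₜ[ℂ] (P.arr (P.star b) * y) else 0) -
              (x * P.arr (P.star b)) ⊗ₜ[ℂ] (P.e i * y))) :
              P.E ⊕ P.E → P.A ⊗[ℂ] P.A) =
          (Pi.single b ((x * P.e i) ⊗ₜ[ℂ] (P.arr (P.star b) * y)) -
            (if i = P.dtgt b then
              Pi.single b (x ⊗ₜ[ℂ] (P.arr (P.star b) * y)) else 0)) +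
          (Pi.single b ((x * P.arr (P.star b)) ⊗ₜ[ℂ] (P.e i * y)) -
            (if i = P.dsrc b then
              Pi.single b ((x * P.arr (P.star b)) ⊗ₜ[ℂ] y) else 0)) := by
        split_ifs <;>
          simp only [sub_zero, zero_sub, sub_neg_eq_add, Pi.single_sub, Pi.single_add,
            Pi.single_neg] <;>
          abel
      rw [heq]
      exact Submodule.add_mem _ g1 g2)

/-- `i : 𝔑 → A ⊗_R A`, `a ↦ a ∑_i x_i ⊗ x_i*` (on underlying spaces; here `x_i = bas i`
is the chosen basis of `A` and `x_i* = dbas i` its dual basis under the Frobenius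
form). -/
noncomputable def iMap : P.A →ₗ[ℂ] P.AxA :=
  P.mkAA ∘ₗ
    (∑ j, ((TensorProduct.mk ℂ P.A P.A).flip (P.dbas j)) ∘ₗ
      LinearMap.mulRight ℂ (P.bas j))

/-- `d₃ = i ∘ j : A ⊗_R 𝔑 → A ⊗_R A` (on underlying spaces), the splicing map of the
periodic Schofield resolution; the same formula also gives the map
`d₆ : A ⊗_R A [2h] → A ⊗_R 𝔑 [h+2]` on underlying spaces. -/
noncomputable def d3 : P.AxA →ₗ[ℂ] P.AxA := P.iMap ∘ₗ P.d0

end PreprojectiveAlgebra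

namespace PreprojectiveAlgebra

open TensorProduct

variable (P : PreprojectiveAlgebra)

/-- `φ ∈ Hom_{Aᵉ}(A ⊗_R A, A)`: the linear map `φ` is a map of `A`-bimodules. -/
def IsBimod (φ : P.AxA →ₗ[ℂ] P.A) : Prop :=
  ∀ a c x y : P.A,
    φ (P.mkAA ((a * x) ⊗ₜ[ℂ] (y * c))) = a * φ (P.mkAA (x ⊗ₜ[ℂ] y)) * c

/-- `φ ∈ Hom_{Aᵉ}(A ⊗_R 𝔑, A)`: a bimodule map out of the `η`-twisted bimodule
`A ⊗_R 𝔑` (which has the same underlying space `AxA`, the right action being twisted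
by the Nakayama automorphism `η`). -/
def IsBimodTw (φ : P.AxA →ₗ[ℂ] P.A) : Prop :=
  ∀ a c x y : P.A,
    φ (P.mkAA ((a * x) ⊗ₜ[ℂ] (y * P.eta c))) = a * φ (P.mkAA (x ⊗ₜ[ℂ] y)) * c

/-- `ψ ∈ Hom_{Aᵉ}(A ⊗_R V ⊗_R A, A)`: the linear map `ψ` is a map of `A`-bimodules. -/
def IsBimodV (ψ : P.AVA →ₗ[ℂ] P.A) : Prop :=
  ∀ (a c : P.A) (g : P.E ⊕ P.E → P.A ⊗[ℂ] P.A),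
    ψ (P.mkAVA fun b =>
        TensorProduct.map (LinearMap.mulLeft ℂ a) (LinearMap.mulRight ℂ c) (g b)) =
      a * ψ (P.mkAVA g) * c

/-- `ψ ∈ Hom_{Aᵉ}(A ⊗_R V ⊗_R 𝔑, A)`: a bimodule map out of the `η`-twisted bimodule
`A ⊗_R V ⊗_R 𝔑`. -/
def IsBimodVTw (ψ : P.AVA →ₗ[ℂ] P.A) : Prop :=
  ∀ (a c : P.A) (g : P.E ⊕ P.E → P.A ⊗[ℂ] P.A),
    ψ (P.mkAVA fun b =>
        TensorProduct.map (LinearMap.mulLeft ℂ a) (LinearMap.mulRight ℂ (P.eta c)) (g b)) =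
      a * ψ (P.mkAVA g) * c

/-- The identification `Hom_{Aᵉ}(A ⊗_R A, A) = A^R` (and `Hom_{Aᵉ}(A ⊗_R 𝔑, A) = 𝔑^R`):
`φ ↦ φ(1 ⊗ 1)`. -/
noncomputable def iotaA (φ : P.AxA →ₗ[ℂ] P.A) : P.A := φ (P.mkAA (1 ⊗ₜ[ℂ] 1))

/-- The identification `Hom_{Aᵉ}(A ⊗_R V ⊗_R A, A) = (V ⊗_R A)^R [-2]` (and its
`𝔑`-twisted analogue): `ψ ↦ ∑_{a ∈ Q̄} ε_{a*} a* ⊗ ψ(1 ⊗ a ⊗ 1)`, recorded as the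
function sending the arrow `b` to the coefficient of `b`. -/
noncomputable def iotaV (ψ : P.AVA →ₗ[ℂ] P.A) : P.E ⊕ P.E → P.A :=
  fun b => P.eps b • ψ (P.mkAVA (Pi.single (P.star b) ((1 : P.A) ⊗ₜ[ℂ] 1)))

/-- the homology differential `d₁' : (V ⊗_R A)^R → A^R`, `∑ a ⊗ x_a ↦ ∑ [a, x_a]`
(as a raw formula) -/
noncomputable def D1raw (g : P.E ⊕ P.E → P.A) : P.A :=
  ∑ b : P.E ⊕ P.E, (P.arr b * g b - g b * P.arr b)

/-- the homology differential `d₂' : A^R → (V ⊗_R A)^R`,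
`x ↦ -∑_{a ∈ Q̄} ε_a a* ⊗ [a, x]` (as a raw formula; the `b`-component of the result
comes from the summand `a = b*`) -/
noncomputable def D2raw (x : P.A) : P.E ⊕ P.E → P.A :=
  fun b => -P.eps (P.star b) • (P.arr (P.star b) * x - x * P.arr (P.star b))

/-- the homology differential `d₃' : 𝔑^R → A^R`, `x ↦ ∑_i x_i x η(x_i*)` -/
noncomputable def D3raw (x : P.A) : P.A := ∑ j, P.bas j * x * P.eta (P.dbas j)

/-- the homology differential `d₄' : (V ⊗_R 𝔑)^R → 𝔑^R`,
`∑ a ⊗ x_a ↦ ∑ (a x_a - x_a η(a))` -/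
noncomputable def D4raw (g : P.E ⊕ P.E → P.A) : P.A :=
  ∑ b : P.E ⊕ P.E, (P.arr b * g b - g b * P.eta (P.arr b))

/-- the homology differential `d₅' : 𝔑^R → (V ⊗_R 𝔑)^R`,
`x ↦ ∑_{a ∈ Q̄} ε_a a* ⊗ (x η(a) - a x)` (as a raw formula) -/
noncomputable def D5raw (x : P.A) : P.E ⊕ P.E → P.A :=
  fun b => P.eps (P.star b) • (x * P.eta (P.arr (P.star b)) - P.arr (P.star b) * x)

/-- the homology differential `d₆' : A^R → 𝔑^R`, `x ↦ ∑_i x_i x x_i*` -/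
noncomputable def D6raw (x : P.A) : P.A := ∑ j, P.bas j * x * P.dbas j

end PreprojectiveAlgebra

namespace PreprojectiveAlgebra

open TensorProduct

variable (P : PreprojectiveAlgebra)

theorem star_star (b : P.E ⊕ P.E) : P.star (P.star b) = b := by
  rcases b with b | b <;> rfl

theorem eps_star (b : P.E ⊕ P.E) : P.eps (P.star b) = - P.eps b := by
  rcases b with b | b <;> simp [eps, star]

theorem d0_mk (x y : P.A) : P.d0 (P.mkAA (x ⊗ₜ[ℂ] y)) = x * y := by
  rw [d0, mkAA, Submodule.mkQ_apply, Submodule.liftQ_apply]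
  simp

theorem d1_single (c : P.E ⊕ P.E) (x y : P.A) :
    P.d1 (P.mkAVA (Pi.single c (x ⊗ₜ[ℂ] y))) =
      P.mkAA ((x * P.arr c) ⊗ₜ[ℂ] y) - P.mkAA (x ⊗ₜ[ℂ] (P.arr c * y)) := by
  rw [d1, mkAVA, Submodule.mkQ_apply, Submodule.liftQ_apply, lsum_piSingle]
  simp

theorem d2_mk (x y : P.A) :
    P.d2 (P.mkAA (x ⊗ₜ[ℂ] y)) =
      P.mkAVA (fun b => P.eps b •
        (x ⊗ₜ[ℂ] (P.arr (P.star b) * y) - (x * P.arr (P.star b)) ⊗ₜ[ℂ] y)) := by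
  rw [d2, mkAA, Submodule.mkQ_apply, Submodule.liftQ_apply]
  simp only [LinearMap.coe_comp, Function.comp_apply]
  congr 1

theorem iMap_apply (x : P.A) :
    P.iMap x = ∑ j, P.mkAA ((x * P.bas j) ⊗ₜ[ℂ] P.dbas j) := by
  simp [iMap, LinearMap.sum_apply, map_sum]

theorem bimod_apply (φ : P.AxA →ₗ[ℂ] P.A) (h : P.IsBimod φ) (a c : P.A) :
    φ (P.mkAA (a ⊗ₜ[ℂ] c)) = a * P.iotaA φ * c := by
  simpa [iotaA] using h a c 1 1

theorem bimodTw_apply (φ : P.AxA →ₗ[ℂ] P.A) (h : P.IsBimodTw φ) (a c : P.A) :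
    φ (P.mkAA (a ⊗ₜ[ℂ] c)) = a * P.iotaA φ * P.eta c := by
  have := h a (P.eta c) 1 1
  simpa [iotaA, P.eta_invol c] using this

theorem single_map (b b' : P.E ⊕ P.E) (a c u v : P.A) :
    TensorProduct.map (LinearMap.mulLeft ℂ a) (LinearMap.mulRight ℂ c)
        (Pi.single (M := fun _ => P.A ⊗[ℂ] P.A) b (u ⊗ₜ[ℂ] v) b') =
      Pi.single (M := fun _ => P.A ⊗[ℂ] P.A) b ((a * u) ⊗ₜ[ℂ] (v * c)) b' := by
  rcases eq_or_ne b' b with h | h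
  · subst h; simp
  · simp [Pi.single_eq_of_ne h]

theorem bimodV_single (ψ : P.AVA →ₗ[ℂ] P.A) (h : P.IsBimodV ψ) (b : P.E ⊕ P.E)
    (a c : P.A) :
    ψ (P.mkAVA (Pi.single b (a ⊗ₜ[ℂ] c))) =
      a * ψ (P.mkAVA (Pi.single b ((1 : P.A) ⊗ₜ[ℂ] 1))) * c := by
  have := h a c (Pi.single b ((1 : P.A) ⊗ₜ[ℂ] 1))
  simp only [P.single_map, mul_one, one_mul] at this
  exact this

theorem bimodVTw_single (ψ : P.AVA →ₗ[ℂ] P.A) (h : P.IsBimodVTw ψ) (b : P.E ⊕ P.E)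
    (a c : P.A) :
    ψ (P.mkAVA (Pi.single b (a ⊗ₜ[ℂ] c))) =
      a * ψ (P.mkAVA (Pi.single b ((1 : P.A) ⊗ₜ[ℂ] 1))) * P.eta c := by
  have := h a (P.eta c) (Pi.single b ((1 : P.A) ⊗ₜ[ℂ] 1))
  simp only [P.single_map, mul_one, one_mul, P.eta_invol c] at this
  exact this

theorem sum_star {M : Type*} [AddCommMonoid M] (f : P.E ⊕ P.E → M) :
    ∑ b, f (P.star b) = ∑ b, f b :=
  Fintype.sum_bijective P.star
    (Function.Involutive.bijective P.star_star) _ _ (fun _ => rfl)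

end PreprojectiveAlgebra

open PreprojectiveAlgebra

/-!
STATEMENT 6 (the Hochschild cohomology complex versus the homology complex): let
`A = Π_Q` be the preprojective algebra of an ADE quiver `Q`.  Applying
`Hom_{Aᵉ}(-, A)` to the Schofield resolution and using the identifications
`Hom_{Aᵉ}(A ⊗_R A, A) = A^R`, `Hom_{Aᵉ}(A ⊗_R 𝔑, A) = 𝔑^R`,
`Hom_{Aᵉ}(A ⊗_R V ⊗_R A, A) = (V ⊗_R A)^R[-2]`,
`Hom_{Aᵉ}(A ⊗_R V ⊗_R 𝔑, A) = (V ⊗_R 𝔑)^R[-2]`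
(given by `φ ↦ φ(1 ⊗ 1)` resp. `ψ ↦ ∑_{a ∈ Q̄} ε_{a*} a* ⊗ ψ(1 ⊗ a ⊗ 1)`, i.e. `iotaA`
and `iotaV`), the differentials of the resulting Hochschild cohomology complex coincide
with those of the Hochschild homology complex up to shift:
`d₁* = d₂'[-2]`, `d₂* = d₁'[-2]`, `d₃* = d₆'[-2h-2]`, `d₄* = d₅'[-2h-2]`,
`d₅* = d₄'[-2h-2]`, `d₆* = d₃'[-2h-2]`.  Hence each 3-term portion of the Hochschild
cohomology complex is identified, up to a shift in degree, with a corresponding portion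
of the Hochschild homology complex.

Here the Schofield differentials `d₁`, `d₂`, `d₃ = i ∘ j` are the concrete maps
constructed above (on underlying spaces, `d₄ = d₁`, `d₅ = d₂` and `d₆ = d₃`, the
twist by `𝔑` being recorded in the bimodule condition `IsBimodTw`/`IsBimodVTw` on the
cochains instead), `d_i* φ = φ ∘ d_i` is the cohomology differential, and `d₁'`, …,
`d₆'` are the homology differentials, given by the raw formulas `D1raw`, …, `D6raw`.
The degree shifts `[·]` do not affect the identities and are omitted.
-/
theorem hochschild_cohomology_complex_of_ADE_preprojective_algebra
    (P : PreprojectiveAlgebra) (hADE : P.IsADE) :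
    -- `d₁* = d₂'`
    (∀ φ : P.AxA →ₗ[ℂ] P.A, P.IsBimod φ →
      P.iotaV (φ ∘ₗ P.d1) = P.D2raw (P.iotaA φ)) ∧
    -- `d₂* = d₁'`
    (∀ ψ : P.AVA →ₗ[ℂ] P.A, P.IsBimodV ψ →
      P.iotaA (ψ ∘ₗ P.d2) = P.D1raw (P.iotaV ψ)) ∧
    -- `d₃* = d₆'`
    (∀ φ : P.AxA →ₗ[ℂ] P.A, P.IsBimod φ →
      P.iotaA (φ ∘ₗ P.d3) = P.D6raw (P.iotaA φ)) ∧
    -- `d₄* = d₅'`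
    (∀ φ : P.AxA →ₗ[ℂ] P.A, P.IsBimodTw φ →
      P.iotaV (φ ∘ₗ P.d1) = P.D5raw (P.iotaA φ)) ∧
    -- `d₅* = d₄'`
    (∀ ψ : P.AVA →ₗ[ℂ] P.A, P.IsBimodVTw ψ →
      P.iotaA (ψ ∘ₗ P.d2) = P.D4raw (P.iotaV ψ)) ∧
    -- `d₆* = d₃'`
    (∀ φ : P.AxA →ₗ[ℂ] P.A, P.IsBimodTw φ →
      P.iotaA (φ ∘ₗ P.d3) = P.D3raw (P.iotaA φ)) := by
  classical
  refine ⟨?_, ?_, ?_, ?_, ?_, ?_⟩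
  · -- d₁* = d₂'
    intro φ hφ
    funext b
    simp only [iotaV, D2raw, LinearMap.comp_apply, P.d1_single, one_mul, mul_one,
      map_sub, P.bimod_apply φ hφ, P.eps_star]
    module
  · -- d₂* = d₁'
    intro ψ hψ
    rw [iotaA, LinearMap.comp_apply, P.d2_mk, D1raw,
      ← P.sum_star (fun c => P.arr c * P.iotaV ψ c - P.iotaV ψ c * P.arr c),
      ← Finset.univ_sum_single (fun b => P.eps b •
        ((1 : P.A) ⊗ₜ[ℂ] (P.arr (P.star b) * 1) -
          (1 * P.arr (P.star b)) ⊗ₜ[ℂ] (1 : P.A))), map_sum, map_sum]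
    refine Finset.sum_congr rfl fun b _ => ?_
    simp only [mul_one, one_mul, Pi.single_smul, Pi.single_sub, map_smul, map_sub]
    rw [P.bimodV_single ψ hψ b 1 (P.arr (P.star b)),
      P.bimodV_single ψ hψ b (P.arr (P.star b)) 1]
    simp only [iotaV, P.star_star, P.eps_star, one_mul, mul_one, mul_smul_comm,
      smul_mul_assoc]
    module
  · -- d₃* = d₆'
    intro φ hφ
    conv_lhs => rw [iotaA]
    simp only [LinearMap.comp_apply, d3, P.d0_mk, one_mul, P.iMap_apply,
      map_sum, P.bimod_apply φ hφ, D6raw]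
  · -- d₄* = d₅'
    intro φ hφ
    funext b
    simp only [iotaV, D5raw, LinearMap.comp_apply, P.d1_single, one_mul, mul_one,
      map_sub, P.bimodTw_apply φ hφ, map_one, P.eps_star]
    module
  · -- d₅* = d₄'
    intro ψ hψ
    rw [iotaA, LinearMap.comp_apply, P.d2_mk, D4raw,
      ← P.sum_star (fun c => P.arr c * P.iotaV ψ c - P.iotaV ψ c * P.eta (P.arr c)),
      ← Finset.univ_sum_single (fun b => P.eps b •
        ((1 : P.A) ⊗ₜ[ℂ] (P.arr (P.star b) * 1) -
          (1 * P.arr (P.star b)) ⊗ₜ[ℂ] (1 : P.A))), map_sum, map_sum]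
    refine Finset.sum_congr rfl fun b _ => ?_
    simp only [mul_one, one_mul, Pi.single_smul, Pi.single_sub, map_smul, map_sub]
    rw [P.bimodVTw_single ψ hψ b 1 (P.arr (P.star b)),
      P.bimodVTw_single ψ hψ b (P.arr (P.star b)) 1]
    simp only [iotaV, P.star_star, P.eps_star, one_mul, mul_one, map_one,
      mul_smul_comm, smul_mul_assoc]
    module
  · -- d₆* = d₃'
    intro φ hφ
    conv_lhs => rw [iotaA]
    simp only [LinearMap.comp_apply, d3, P.d0_mk, one_mul, P.iMap_apply,
      map_sum, P.bimodTw_apply φ hφ, D3raw]
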